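/- arXiv:2203.10237 — 6 statements merged into one kernel-verified Lean document; each statement's English description precedes it below -/
import Mathlib

section
/- For every natural number n, there is no family S_1, …, S_{n+1} of subsets of [n] such that every S_i has odd cardinality and, for all i < i', the intersection S_i ∩ S_{i'} has even cardinality. (The oddtown theorem, i.e. the validity of the principle oddtown_n: there cannot be n+1 'odd' sets over an n-element universe with pairwise 'even' intersections.) -/
/-- **Oddtown theorem** (`oddtown_n`): for every natural number `n`, there is no family
`S_1, …, S_{n+1}` of subsets of `[n]` such that every `S_i` has odd cardinality and every
pairwise intersection `S_i ∩ S_{i'}` (for `i < i'`) has even cardinality. -/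
theorem oddtown (n : ℕ) :
    ¬ ∃ S : Fin (n + 1) → Finset (Fin n),
        (∀ i, Odd (S i).card) ∧
        (∀ i i' : Fin (n + 1), i < i' → Even ((S i ∩ S i').card)) := by
  rintro ⟨S, hodd, heven⟩
  set v : Fin (n + 1) → (Fin n → ZMod 2) :=
    fun i x => if x ∈ S i then 1 else 0 with hv
  have hdot : ∀ i j, ∑ x, v i x * v j x = ((S i ∩ S j).card : ZMod 2) := by
    intro i j
    have : ∀ x : Fin n, v i x * v j x = if x ∈ S i ∩ S j then 1 else 0 := by
      intro x
      simp only [hv, Finset.mem_inter]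
      by_cases h1 : x ∈ S i <;> by_cases h2 : x ∈ S j <;> simp [h1, h2]
    rw [Finset.sum_congr rfl fun x _ => this x]
    rw [Finset.sum_ite_mem, Finset.univ_inter, Finset.sum_const, nsmul_eq_mul, mul_one]
  have hdiag : ∀ i, ∑ x, v i x * v i x = 1 := by
    intro i
    rw [hdot, Finset.inter_self]
    obtain ⟨k, hk⟩ := hodd i
    rw [hk]
    push_cast
    rw [show (2 : ZMod 2) = 0 from rfl]
    ring
  have hoff : ∀ i j, i ≠ j → ∑ x, v i x * v j x = 0 := by
    have key : ∀ i j, i < j → ((S i ∩ S j).card : ZMod 2) = 0 := by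
      intro i j h
      obtain ⟨k, hk⟩ := heven i j h
      rw [hk]
      have : k + k = 2 * k := by ring
      rw [this]
      push_cast
      rw [show (2 : ZMod 2) = 0 from rfl]
      ring
    intro i j hij
    rcases hij.lt_or_gt with h | h
    · rw [hdot]; exact key i j h
    · have : ∀ x, v i x * v j x = v j x * v i x := fun x => mul_comm _ _
      rw [Finset.sum_congr rfl fun x _ => this x, hdot]
      exact key j i h
  have hli : LinearIndependent (ZMod 2) v := by
    rw [Fintype.linearIndependent_iff]
    intro c hc j
    have hcx : ∀ x, ∑ i, c i * v i x = 0 := by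
      intro x
      have := congrFun hc x
      simpa using this
    have h0 : ∑ i, c i * ∑ x, v i x * v j x = 0 := by
      calc ∑ i, c i * ∑ x, v i x * v j x
          = ∑ i, ∑ x, c i * v i x * v j x := by
            simp [Finset.mul_sum, mul_assoc]
        _ = ∑ x, ∑ i, c i * v i x * v j x := Finset.sum_comm
        _ = ∑ x, (∑ i, c i * v i x) * v j x := by
            simp [Finset.sum_mul]
        _ = 0 := by simp [hcx]
    rw [Finset.sum_eq_single j] at h0
    · rwa [hdiag j, mul_one] at h0
    · intro i _ hij
      rw [hoff i j hij, mul_zero]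
    · simp
  have := hli.fintype_card_le_finrank
  simp [Module.finrank_pi] at this
end

section
/- For every natural number n ≥ 1, there do not exist subsets S_1, …, S_{n+1} of [n], elements q_1, …, q_{n+1} with q_i ∈ S_i for each i, for each i a 2-partition (a partition into pairs) of S_i ∖ {q_i}, and for each pair i < i' a 2-partition of S_i ∩ S_{i'}. -/
/-- A 2-partition of a finite set `X`: a collection of pairwise disjoint 2-element
subsets of `X` whose union is `X`. -/
def IsTwoPartition {α : Type*} [DecidableEq α] (P : Finset (Finset α)) (X : Finset α) : Prop :=
  (∀ e ∈ P, e.card = 2) ∧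
  (∀ e ∈ P, ∀ e' ∈ P, e ≠ e' → Disjoint e e') ∧
  P.sup id = X

lemma twoPartition_even {α : Type*} [DecidableEq α] {P : Finset (Finset α)} {X : Finset α}
    (h : IsTwoPartition P X) : Even X.card := by
  obtain ⟨h2, hd, hsup⟩ := h
  rw [← hsup, Finset.sup_eq_biUnion, Function.id_def,
    Finset.card_biUnion (fun x hx y hy hxy => hd x hx y hy hxy)]
  refine ⟨P.card, ?_⟩
  rw [Finset.sum_congr rfl (fun e he => h2 e he), Finset.sum_const, smul_eq_mul]
  ring

lemma even_cast_zmod2 {m : ℕ} (h : Even m) : (m : ZMod 2) = 0 := by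
  rw [ZMod.natCast_eq_zero_iff]
  exact h.two_dvd

/-- Validity of the paper's explicit formalization `oddtown_n` of the oddtown theorem:
for `n ≥ 1` there do not exist subsets `S_1, …, S_{n+1}` of `[n]`, distinguished elements
`q_i ∈ S_i`, 2-partitions of each `S_i ∖ {q_i}`, and 2-partitions of each intersection
`S_i ∩ S_{i'}` for `i < i'`. -/
theorem oddtown_explicit (n : ℕ) (hn : 1 ≤ n) :
    ¬ ∃ (S : Fin (n + 1) → Finset (Fin n)) (q : Fin (n + 1) → Fin n)
        (P : Fin (n + 1) → Finset (Finset (Fin n)))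
        (R : Fin (n + 1) → Fin (n + 1) → Finset (Finset (Fin n))),
        (∀ i, q i ∈ S i) ∧
        (∀ i, IsTwoPartition (P i) ((S i).erase (q i))) ∧
        (∀ i i' : Fin (n + 1), i < i' → IsTwoPartition (R i i') (S i ∩ S i')) := by
  rintro ⟨S, q, P, R, hq, hP, hR⟩
  classical
  set v : Fin (n + 1) → (Fin n → ZMod 2) := fun i x => if x ∈ S i then 1 else 0 with hv
  have dot : ∀ i j, ∑ x, v i x * v j x = ((S i ∩ S j).card : ZMod 2) := by
    intro i j
    have h1 : ∀ x, v i x * v j x = if x ∈ S i ∩ S j then 1 else 0 := by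
      intro x
      simp only [hv, Finset.mem_inter]
      by_cases h1 : x ∈ S i <;> by_cases h2 : x ∈ S j <;> simp [h1, h2]
    simp only [h1]
    rw [Finset.sum_ite_mem, Finset.univ_inter, Finset.sum_const, nsmul_eq_mul, mul_one]
  have dotself : ∀ i, ∑ x, v i x * v i x = 1 := by
    intro i
    rw [dot, Finset.inter_self]
    have hcard : (S i).card = ((S i).erase (q i)).card + 1 :=
      (Finset.card_erase_add_one (hq i)).symm
    rw [hcard]
    push_cast
    rw [even_cast_zmod2 (twoPartition_even (hP i)), zero_add]
  have dotne : ∀ i j, i ≠ j → ∑ x, v i x * v j x = 0 := by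
    intro i j hij
    rcases lt_or_gt_of_ne hij with h | h
    · rw [dot]
      exact even_cast_zmod2 (twoPartition_even (hR i j h))
    · rw [dot, Finset.inter_comm]
      exact even_cast_zmod2 (twoPartition_even (hR j i h))
  have hli : LinearIndependent (ZMod 2) v := by
    rw [Fintype.linearIndependent_iff]
    intro g hg j
    have h0 : ∑ x, (∑ i, g i • v i) x * v j x = 0 := by rw [hg]; simp
    simp only [Finset.sum_apply, Pi.smul_apply, smul_eq_mul, Finset.sum_mul] at h0
    rw [Finset.sum_comm] at h0
    simp only [mul_assoc, ← Finset.mul_sum] at h0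
    rw [Finset.sum_eq_single j] at h0
    · rwa [dotself, mul_one] at h0
    · intro i _ hij
      rw [dotne i j hij, mul_zero]
    · intro h
      exact absurd (Finset.mem_univ j) h
  have hc := hli.fintype_card_le_finrank
  rw [Module.finrank_pi, Fintype.card_fin, Fintype.card_fin] at hc
  omega
end

section
/- For every natural number n, there do not exist subsets S_1, …, S_{n+1} of [n] such that: each S_i is nonempty; for every pair i_1 < i_2 there exists j ∈ [n] lying in exactly one of S_{i_1} and S_{i_2}; and for all pairs i_1 < i_2 and i_1' < i_2' there exists a bijection between S_{i_1} ∩ S_{i_2} and S_{i_1'} ∩ S_{i_2'}. -/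
/-- Validity of the paper's explicit formalization `FIE_n` of Fisher's inequality:
for every natural number `n`, there do not exist subsets `S_1, …, S_{n+1}` of `[n]` such that
each `S_i` is nonempty, for every `i₁ < i₂` some `j ∈ [n]` lies in exactly one of `S_{i₁}` and
`S_{i₂}`, and for all pairs `i₁ < i₂` and `i₁' < i₂'` there is a bijection between
`S_{i₁} ∩ S_{i₂}` and `S_{i₁'} ∩ S_{i₂'}`. -/
theorem fisher_inequality_explicit (n : ℕ) :
    ¬ ∃ S : Fin (n + 1) → Finset (Fin n),
        (∀ i, (S i).Nonempty) ∧
        (∀ i₁ i₂ : Fin (n + 1), i₁ < i₂ →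
          ∃ j : Fin n, (j ∈ S i₁ ∧ j ∉ S i₂) ∨ (j ∉ S i₁ ∧ j ∈ S i₂)) ∧
        (∀ i₁ i₂ i₁' i₂' : Fin (n + 1), i₁ < i₂ → i₁' < i₂' →
          Nonempty ((S i₁ ∩ S i₂ : Finset (Fin n)) ≃ (S i₁' ∩ S i₂' : Finset (Fin n)))) := by
  rintro ⟨S, hne, hsep, hbij⟩
  rcases Nat.eq_zero_or_pos n with hn | hn
  · subst hn
    obtain ⟨j, -⟩ := hne 0
    exact j.elim0
  obtain ⟨L, hL⟩ : ∃ L : ℕ, L = (S ⟨0, by omega⟩ ∩ S ⟨1, by omega⟩).card := ⟨_, rfl⟩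
  have h01 : (⟨0, by omega⟩ : Fin (n + 1)) < ⟨1, by omega⟩ := by
    simp [Fin.lt_def]
  -- all pairwise intersections have card L
  have hcard : ∀ i k : Fin (n + 1), i ≠ k → (S i ∩ S k).card = L := by
    intro i k hik
    have key : ∀ a b : Fin (n + 1), a < b → (S a ∩ S b).card = L := by
      intro a b hab
      obtain ⟨e⟩ := hbij a b ⟨0, by omega⟩ ⟨1, by omega⟩ hab h01
      rw [hL]
      exact (Fintype.card_coe _).symm.trans ((Fintype.card_congr e).trans (Fintype.card_coe _))
    rcases lt_or_gt_of_ne hik with h | h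
    · exact key i k h
    · rw [Finset.inter_comm]; exact key k i h
  -- sets are pairwise distinct
  have hdist : ∀ i k : Fin (n + 1), i ≠ k → S i ≠ S k := by
    intro i k hik heq
    rcases lt_or_gt_of_ne hik with h | h
    · obtain ⟨j, hj⟩ := hsep i k h
      rw [heq] at hj; tauto
    · obtain ⟨j, hj⟩ := hsep k i h
      rw [heq] at hj; tauto
  -- L ≤ card of each set
  have hLle : ∀ i : Fin (n + 1), L ≤ (S i).card := by
    intro i
    by_cases h : i = ⟨0, by omega⟩
    · rw [← hcard i ⟨1, by omega⟩ (by rw [h]; exact Fin.ne_of_lt h01)]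
      exact Finset.card_le_card Finset.inter_subset_left
    · rw [← hcard i ⟨0, by omega⟩ h]
      exact Finset.card_le_card Finset.inter_subset_left
  -- at most one set of card L
  have huniq : ∀ i k : Fin (n + 1), i ≠ k → (S i).card = L → (S k).card = L → False := by
    intro i k hik hi hk
    have h1 : S i ∩ S k = S i :=
      Finset.eq_of_subset_of_card_le Finset.inter_subset_left
        (by rw [hcard i k hik, hi])
    have h2 : S i ∩ S k = S k :=
      Finset.eq_of_subset_of_card_le Finset.inter_subset_right
        (by rw [hcard i k hik, hk])
    exact hdist i k hik (h1 ▸ h2)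
  -- the indicator vectors
  set v : Fin (n + 1) → (Fin n → ℝ) := fun i j => if j ∈ S i then 1 else 0 with hv
  have hli : LinearIndependent ℝ v := by
    rw [Fintype.linearIndependent_iff]
    intro g hg
    have hpt : ∀ j : Fin n, (∑ i, g i * (if j ∈ S i then (1:ℝ) else 0)) = 0 := by
      intro j
      have := congrFun hg j
      simpa [hv, Finset.sum_apply] using this
    -- dot products of indicators
    have hdot : ∀ i k : Fin (n + 1),
        (∑ j : Fin n, (if j ∈ S i then (1:ℝ) else 0) * (if j ∈ S k then (1:ℝ) else 0))
          = ((S i ∩ S k).card : ℝ) := by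
      intro i k
      have h : ∀ j : Fin n, (if j ∈ S i then (1:ℝ) else 0) * (if j ∈ S k then (1:ℝ) else 0)
          = if j ∈ S i ∩ S k then 1 else 0 := by
        intro j
        by_cases h1 : j ∈ S i <;> by_cases h2 : j ∈ S k <;> simp [h1, h2]
      rw [Finset.sum_congr rfl fun j _ => h j, Finset.sum_ite_mem, Finset.univ_inter,
        Finset.sum_const, nsmul_eq_mul, mul_one]
    -- the quadratic form identity
    have key : (L : ℝ) * (∑ i, g i) ^ 2 + ∑ i, (g i) ^ 2 * (((S i).card : ℝ) - L) = 0 := by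
      have expand : (0:ℝ) = ∑ j : Fin n,
          (∑ i, g i * (if j ∈ S i then (1:ℝ) else 0)) *
          (∑ k, g k * (if j ∈ S k then (1:ℝ) else 0)) := by
        symm
        refine Finset.sum_eq_zero fun j _ => ?_
        rw [hpt j, zero_mul]
      have step : (∑ j : Fin n, (∑ i, g i * (if j ∈ S i then (1:ℝ) else 0)) *
          (∑ k, g k * (if j ∈ S k then (1:ℝ) else 0)))
          = ∑ i, ∑ k, g i * g k * ((S i ∩ S k).card : ℝ) := by
        calc (∑ j : Fin n, (∑ i, g i * (if j ∈ S i then (1:ℝ) else 0)) *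
              (∑ k, g k * (if j ∈ S k then (1:ℝ) else 0)))
            = ∑ j : Fin n, ∑ i, ∑ k, (g i * (if j ∈ S i then (1:ℝ) else 0)) *
              (g k * (if j ∈ S k then (1:ℝ) else 0)) := by
              refine Finset.sum_congr rfl fun j _ => ?_
              rw [Finset.sum_mul_sum]
          _ = ∑ i, ∑ k, ∑ j : Fin n, (g i * (if j ∈ S i then (1:ℝ) else 0)) *
              (g k * (if j ∈ S k then (1:ℝ) else 0)) := by
              rw [Finset.sum_comm]
              exact Finset.sum_congr rfl fun i _ => Finset.sum_comm
          _ = ∑ i, ∑ k, g i * g k * ((S i ∩ S k).card : ℝ) := by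
              refine Finset.sum_congr rfl fun i _ => Finset.sum_congr rfl fun k _ => ?_
              rw [← hdot i k, Finset.mul_sum]
              exact Finset.sum_congr rfl fun j _ => by ring
      rw [step] at expand
      have split : ∀ i k : Fin (n + 1), ((S i ∩ S k).card : ℝ)
          = (L : ℝ) + (if i = k then ((S i).card : ℝ) - L else 0) := by
        intro i k
        by_cases h : i = k
        · subst h; simp
        · rw [hcard i k h]; simp [h]
      have final : (∑ i, ∑ k, g i * g k * ((S i ∩ S k).card : ℝ))
          = (L : ℝ) * (∑ i, g i) ^ 2 + ∑ i, (g i) ^ 2 * (((S i).card : ℝ) - L) := by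
        simp only [split, mul_add]
        simp only [Finset.sum_add_distrib]
        congr 1
        · rw [sq, Finset.sum_mul, Finset.mul_sum]
          refine Finset.sum_congr rfl fun i _ => ?_
          rw [Finset.mul_sum, Finset.mul_sum]
          refine Finset.sum_congr rfl fun k _ => by ring
        · refine Finset.sum_congr rfl fun i _ => ?_
          simp only [mul_ite, mul_zero]
          rw [Finset.sum_ite_eq]
          simp only [Finset.mem_univ, if_true]
          ring
      rw [final] at expand
      linarith
    -- nonnegativity of each term
    have hterm : ∀ i : Fin (n + 1), 0 ≤ (g i) ^ 2 * (((S i).card : ℝ) - L) := by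
      intro i
      have h1 : (L : ℝ) ≤ ((S i).card : ℝ) := by exact_mod_cast hLle i
      exact mul_nonneg (sq_nonneg _) (by linarith)
    have hL0 : (0:ℝ) ≤ (L : ℝ) * (∑ i, g i) ^ 2 := by positivity
    have hsum0 : ∑ i, (g i) ^ 2 * (((S i).card : ℝ) - L) = 0 := by
      have h := Finset.sum_nonneg (fun i (_ : i ∈ Finset.univ) => hterm i)
      linarith
    have heach : ∀ i : Fin (n + 1), (g i) ^ 2 * (((S i).card : ℝ) - L) = 0 := by
      intro i
      exact (Finset.sum_eq_zero_iff_of_nonneg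
        (fun i (_ : i ∈ Finset.univ) => hterm i)).mp hsum0 i (Finset.mem_univ i)
    by_cases hLz : L = 0
    · -- pairwise disjoint: read off coordinates
      intro i
      obtain ⟨j, hj⟩ := hne i
      have hpj := hpt j
      have hrest : ∀ k ∈ Finset.univ, k ≠ i →
          g k * (if j ∈ S k then (1:ℝ) else 0) = 0 := by
        intro k _ hk
        have hjk : j ∉ S k := by
          intro hjk
          have hc := hcard i k (Ne.symm hk)
          rw [hLz, Finset.card_eq_zero] at hc
          have hmem : j ∈ S i ∩ S k := Finset.mem_inter.mpr ⟨hj, hjk⟩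
          rw [hc] at hmem
          exact absurd hmem (Finset.notMem_empty j)
        simp [hjk]
      rw [Finset.sum_eq_single_of_mem i (Finset.mem_univ i) hrest] at hpj
      simpa [hj] using hpj
    · -- L > 0 : ∑ g = 0 and g vanishes off one possible index
      have hLpos : (0:ℝ) < (L : ℝ) := by
        exact_mod_cast Nat.pos_of_ne_zero hLz
      have hsumg : ∑ i, g i = 0 := by
        have h1 : (L : ℝ) * (∑ i, g i) ^ 2 = 0 := by linarith
        have h2 : (∑ i, g i) ^ 2 = 0 := by
          rcases mul_eq_zero.mp h1 with h | h
          · linarith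
          · exact h
        exact pow_eq_zero_iff (by norm_num) |>.mp h2
      have hgz : ∀ i : Fin (n + 1), (S i).card ≠ L → g i = 0 := by
        intro i hi
        rcases mul_eq_zero.mp (heach i) with h | h
        · exact pow_eq_zero_iff (by norm_num) |>.mp h
        · exfalso
          have : ((S i).card : ℝ) = (L : ℝ) := by linarith
          exact hi (by exact_mod_cast this)
      intro i
      by_cases hi : (S i).card = L
      · have hothers : ∀ k ∈ Finset.univ, k ≠ i → g k = 0 := by
          intro k _ hk
          exact hgz k fun hkL => huniq k i hk hkL hi
        have := Finset.sum_eq_single_of_mem i (Finset.mem_univ i) hothers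
        rw [this] at hsumg
        exact hsumg
      · exact hgz i hi
  have hcardle := hli.fintype_card_le_finrank
  rw [Module.finrank_fin_fun] at hcardle
  simp at hcardle
end

section
/- Let P, Q_1, Q_2, R_1, R_2 be finite sets (finite types). Then the following three conditions cannot hold simultaneously: (1) there is a bijection between the disjoint union (P × Q_1) ⊔ R_1 and the disjoint union (P × Q_2) ⊔ R_2; (2) there is an injection from R_1 into R_2 whose range omits at least one element of R_2; (3) there is an injection from R_2 into P whose range omits at least one element of P. (Validity of the Generalized Counting Principle GCP.) -/
/-- Validity of the **Generalized Counting Principle** `GCP`: for finite types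
`P, Q₁, Q₂, R₁, R₂`, the following cannot hold simultaneously:
(1) there is a bijection between `(P × Q₁) ⊔ R₁` and `(P × Q₂) ⊔ R₂`;
(2) there is an injection from `R₁` into `R₂` omitting some element of `R₂`;
(3) there is an injection from `R₂` into `P` omitting some element of `P`. -/
theorem generalized_counting_principle
    (P Q₁ Q₂ R₁ R₂ : Type*) [Fintype P] [Fintype Q₁] [Fintype Q₂] [Fintype R₁] [Fintype R₂] :
    ¬ (Nonempty ((P × Q₁) ⊕ R₁ ≃ (P × Q₂) ⊕ R₂) ∧
       (∃ f : R₁ → R₂, Function.Injective f ∧ ∃ b : R₂, b ∉ Set.range f) ∧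
       (∃ g : R₂ → P, Function.Injective g ∧ ∃ b : P, b ∉ Set.range g)) := by
  rintro ⟨⟨e⟩, ⟨f, hf, b, hb⟩, ⟨g, hg, c, hc⟩⟩
  have hcard := Fintype.card_congr e
  simp only [Fintype.card_sum, Fintype.card_prod] at hcard
  have h1 : Fintype.card R₁ < Fintype.card R₂ :=
    Fintype.card_lt_of_injective_of_notMem f hf hb
  have h2 : Fintype.card R₂ < Fintype.card P :=
    Fintype.card_lt_of_injective_of_notMem g hg hc
  set p := Fintype.card P
  set q₁ := Fintype.card Q₁
  set q₂ := Fintype.card Q₂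
  set r₁ := Fintype.card R₁
  set r₂ := Fintype.card R₂
  -- p * q₁ + r₁ = p * q₂ + r₂, r₁ < r₂ < p
  have hq : q₂ < q₁ := by
    by_contra h
    push_neg at h
    have : p * q₁ ≤ p * q₂ := Nat.mul_le_mul_left p h
    omega
  have : p * q₂ + p ≤ p * q₁ := by
    calc p * q₂ + p = p * (q₂ + 1) := by ring
    _ ≤ p * q₁ := Nat.mul_le_mul_left p hq
  omega
end

section
/- Let K be a commutative ring and M > m ≥ 1. For every injPHP-tree T over ([M], [m]), there is an NS-proof over K of Σ_{b ∈ br(T)} x_b = 1 from the polynomial system ¬inj*PHP^M_m whose degree is at most height(T). -/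
open MvPolynomial

/-- An `injPHP`-tree over `(D, R)`: either a single leaf; or a root labelled `i ↦ ?`
(`i ∈ D`) with a child for each `j ∈ R` reached by an edge labelled `⟨i,j⟩`, the child
being an `injPHP`-tree over `(D ∖ {i}, R ∖ {j})`; or a root labelled `? ↦ j` (`j ∈ R`)
with a child for each `i ∈ D` reached by an edge labelled `⟨i,j⟩` (a tree over
`(D ∖ {i}, R ∖ {j})`) plus one child reached by an edge labelled `⟨j⟩` (a tree over
`(D, R ∖ {j})`). -/
inductive InjPHPTree {α β : Type*} [DecidableEq α] [DecidableEq β] :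
    Finset α → Finset β → Type _ where
  | leaf (D : Finset α) (R : Finset β) : InjPHPTree D R
  | queryDom (D : Finset α) (R : Finset β) (i : α) (hi : i ∈ D)
      (children : ∀ j : {j // j ∈ R}, InjPHPTree (D.erase i) (R.erase j.1)) :
      InjPHPTree D R
  | queryRan (D : Finset α) (R : Finset β) (j : β) (hj : j ∈ R)
      (children : ∀ i : {i // i ∈ D}, InjPHPTree (D.erase i.1) (R.erase j))
      (childSing : InjPHPTree D (R.erase j)) :
      InjPHPTree D R

namespace InjPHPTree

variable {α β : Type*} [DecidableEq α] [DecidableEq β]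

/-- The height of an `injPHP`-tree: the maximum number of edges on a branch. -/
def height : ∀ {D : Finset α} {R : Finset β}, InjPHPTree D R → ℕ
  | _, _, leaf _ _ => 0
  | _, R, queryDom _ _ _ _ ch => (R.attach.sup fun j => height (ch j)) + 1
  | D, _, queryRan _ _ _ _ ch chS =>
      max (D.attach.sup fun i => height (ch i)) (height chS) + 1

/-- The list of branches of an `injPHP`-tree; each branch is recorded as the partial
injection it determines, given as the pair of its set of matched pairs `⟨i,j⟩` (the
labels of its 2-element edges) and its set of singletons `⟨j⟩`. -/
noncomputable def branches : ∀ {D : Finset α} {R : Finset β}, InjPHPTree D R →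
    List (Finset (α × β) × Finset β)
  | _, _, leaf _ _ => [(∅, ∅)]
  | _, R, queryDom _ _ i _ ch =>
      R.attach.toList.flatMap fun j =>
        (branches (ch j)).map fun b => (insert (i, j.1) b.1, b.2)
  | D, _, queryRan _ _ j _ ch chS =>
      (D.attach.toList.flatMap fun i =>
        (branches (ch i)).map fun b => (insert (i.1, j) b.1, b.2))
      ++ (branches chS).map fun b => (b.1, insert j b.2)

end InjPHPTree

/-- `IsNSProofOfDeg F g₁ g₂ Dg`: there is a Nullstellensatz proof of `g₁ = g₂` from the
set `F` of polynomials, i.e. a family `(h_f)_{f ∈ F}` with `g₁ - g₂ = Σ_{f ∈ F} h_f · f`,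
whose degree `max_f deg (h_f)` is at most `Dg`. -/
def IsNSProofOfDeg {σ K : Type*} [CommRing K]
    (F : Set (MvPolynomial σ K)) (g₁ g₂ : MvPolynomial σ K) (Dg : ℕ) : Prop :=
  ∃ h : MvPolynomial σ K →₀ MvPolynomial σ K,
    (↑h.support : Set (MvPolynomial σ K)) ⊆ F ∧
    g₁ - g₂ = h.sum (fun f c => c * f) ∧
    ∀ f, (h f).totalDegree ≤ Dg

/-- The polynomial system `¬inj*PHP^M_m` over `K`, in the variables `x_{ij}`
(`i ∈ [M]`, `j ∈ [m]`, encoded as `Sum.inl (i,j)`) and `u_j` (`j ∈ [m]`, encoded as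
`Sum.inr j`). -/
def injStarPHPSystem (K : Type*) [CommRing K] (M m : ℕ) :
    Set (MvPolynomial ((Fin M × Fin m) ⊕ Fin m) K) :=
  {f | ∃ (i : Fin M) (j : Fin m), f = X (Sum.inl (i, j)) ^ 2 - X (Sum.inl (i, j))} ∪
  {f | ∃ (i : Fin M) (j j' : Fin m), j ≠ j' ∧ f = X (Sum.inl (i, j)) * X (Sum.inl (i, j'))} ∪
  {f | ∃ (i i' : Fin M) (j : Fin m), i ≠ i' ∧ f = X (Sum.inl (i, j)) * X (Sum.inl (i', j))} ∪
  {f | ∃ i : Fin M, f = (∑ j : Fin m, X (Sum.inl (i, j))) - 1} ∪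
  {f | ∃ j : Fin m, f = (∑ i : Fin M, X (Sum.inl (i, j))) + X (Sum.inr j) - 1}

/-- The monomial `x_b` associated with a branch `b`: the product of the variables
`x_{ij}` over the pairs `⟨i,j⟩` of `b` and of the variables `u_j` over the singletons
`⟨j⟩` of `b`. -/
noncomputable def branchMonomial {K : Type*} [CommRing K] {M m : ℕ}
    (b : Finset (Fin M × Fin m) × Finset (Fin m)) :
    MvPolynomial ((Fin M × Fin m) ⊕ Fin m) K :=
  (∏ p ∈ b.1, X (Sum.inl p)) * ∏ j ∈ b.2, X (Sum.inr j)

section NS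
variable {σ K : Type*} [CommRing K] {F : Set (MvPolynomial σ K)}

/-- membership in the degree-`d` part generated by `F`. -/
def NSMem (F : Set (MvPolynomial σ K)) (p : MvPolynomial σ K) (d : ℕ) : Prop :=
  ∃ h : MvPolynomial σ K →₀ MvPolynomial σ K,
    (↑h.support : Set (MvPolynomial σ K)) ⊆ F ∧
    p = h.sum (fun f c => c * f) ∧
    ∀ f, (h f).totalDegree ≤ d

lemma isNS_iff {g₁ g₂ : MvPolynomial σ K} {d : ℕ} :
    IsNSProofOfDeg F g₁ g₂ d ↔ NSMem F (g₁ - g₂) d := Iff.rfl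

lemma NSMem.zero (d : ℕ) : NSMem F (0 : MvPolynomial σ K) d := by
  refine ⟨0, by simp, by simp [Finsupp.sum_zero_index], fun f => by simp⟩

lemma NSMem.congr {p q : MvPolynomial σ K} {d : ℕ} (h : NSMem F p d) (e : p = q) :
    NSMem F q d := e ▸ h

lemma NSMem.mono {p : MvPolynomial σ K} {d d' : ℕ} (hd : d ≤ d') (h : NSMem F p d) :
    NSMem F p d' := by
  obtain ⟨h, hs, he, hdg⟩ := h
  exact ⟨h, hs, he, fun f => (hdg f).trans hd⟩

lemma NSMem.add {p q : MvPolynomial σ K} {d : ℕ} (hp : NSMem F p d) (hq : NSMem F q d) :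
    NSMem F (p + q) d := by
  classical
  obtain ⟨h₁, hs₁, he₁, hd₁⟩ := hp
  obtain ⟨h₂, hs₂, he₂, hd₂⟩ := hq
  refine ⟨h₁ + h₂, ?_, ?_, ?_⟩
  · refine subset_trans (Finset.coe_subset.mpr Finsupp.support_add) ?_
    rw [Finset.coe_union]
    exact Set.union_subset hs₁ hs₂
  · rw [he₁, he₂, Finsupp.sum_add_index' (fun f => zero_mul f) (fun f c c' => add_mul c c' f)]
  · intro f
    rw [Finsupp.add_apply]
    exact (totalDegree_add _ _).trans (max_le (hd₁ f) (hd₂ f))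

lemma NSMem.single {f : MvPolynomial σ K} (hf : f ∈ F) {c : MvPolynomial σ K} {d : ℕ}
    (hc : c.totalDegree ≤ d) : NSMem F (c * f) d := by
  classical
  refine ⟨Finsupp.single f c, ?_, ?_, ?_⟩
  · refine subset_trans (Finset.coe_subset.mpr Finsupp.support_single_subset) ?_
    simpa using hf
  · rw [Finsupp.sum_single_index (zero_mul f)]
  · intro g
    rw [Finsupp.single_apply]
    split
    · exact hc
    · simp

lemma NSMem.smul {p : MvPolynomial σ K} {d : ℕ} (c : MvPolynomial σ K) (h : NSMem F p d) :
    NSMem F (c * p) (c.totalDegree + d) := by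
  obtain ⟨h, hs, he, hdg⟩ := h
  refine ⟨Finsupp.mapRange (c * ·) (mul_zero c) h, ?_, ?_, ?_⟩
  · exact subset_trans (Finset.coe_subset.mpr Finsupp.support_mapRange) hs
  · rw [Finsupp.sum_mapRange_index (fun f => by simp), he, Finsupp.mul_sum]
    exact Finsupp.sum_congr fun f _ => (mul_assoc c (h f) f).symm
  · intro f
    rw [Finsupp.mapRange_apply]
    exact (totalDegree_mul _ _).trans (add_le_add le_rfl (hdg f))

lemma NSMem.neg {p : MvPolynomial σ K} {d : ℕ} (h : NSMem F p d) : NSMem F (-p) d := by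
  have := h.smul (-1)
  simp only [neg_one_mul] at this
  refine this.mono ?_ |>.congr rfl
  have : ((-1 : MvPolynomial σ K)).totalDegree = 0 := by
    rw [show (-1 : MvPolynomial σ K) = C (-1) by simp, totalDegree_C]
  omega

lemma NSMem.sub {p q : MvPolynomial σ K} {d : ℕ} (hp : NSMem F p d) (hq : NSMem F q d) :
    NSMem F (p - q) d := (hp.add hq.neg).congr (by ring)

lemma NSMem.finsetSum {ι : Type*} {s : Finset ι} {g : ι → MvPolynomial σ K} {d : ℕ}
    (h : ∀ a ∈ s, NSMem F (g a) d) : NSMem F (∑ a ∈ s, g a) d := by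
  classical
  induction s using Finset.induction with
  | empty => simpa using NSMem.zero d
  | insert x s hx ih =>
    rw [Finset.sum_insert hx]
    exact (h _ (Finset.mem_insert_self _ _)).add
      (ih fun a ha => h a (Finset.mem_insert_of_mem ha))

end NS

section Aux

variable {K : Type*} [CommRing K] {M m : ℕ}

lemma mem_sq (i : Fin M) (j : Fin m) :
    (X (Sum.inl (i, j)) ^ 2 - X (Sum.inl (i, j)) : MvPolynomial _ K) ∈ injStarPHPSystem K M m :=
  Or.inl (Or.inl (Or.inl (Or.inl ⟨i, j, rfl⟩)))

lemma mem_row (i : Fin M) {j j' : Fin m} (h : j ≠ j') :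
    (X (Sum.inl (i, j)) * X (Sum.inl (i, j')) : MvPolynomial _ K) ∈ injStarPHPSystem K M m :=
  Or.inl (Or.inl (Or.inl (Or.inr ⟨i, j, j', h, rfl⟩)))

lemma mem_col {i i' : Fin M} (j : Fin m) (h : i ≠ i') :
    (X (Sum.inl (i, j)) * X (Sum.inl (i', j)) : MvPolynomial _ K) ∈ injStarPHPSystem K M m :=
  Or.inl (Or.inl (Or.inr ⟨i, i', j, h, rfl⟩))

lemma mem_dom (i : Fin M) :
    ((∑ j : Fin m, X (Sum.inl (i, j))) - 1 : MvPolynomial _ K) ∈ injStarPHPSystem K M m :=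
  Or.inl (Or.inr ⟨i, rfl⟩)

lemma mem_ran (j : Fin m) :
    ((∑ i : Fin M, X (Sum.inl (i, j))) + X (Sum.inr j) - 1 : MvPolynomial _ K) ∈
      injStarPHPSystem K M m :=
  Or.inr ⟨j, rfl⟩

lemma totalDegree_X_le' {σ R : Type*} [CommSemiring R] (s : σ) :
    (X s : MvPolynomial σ R).totalDegree ≤ 1 := by
  refine le_trans (totalDegree_monomial_le (Finsupp.single s 1) 1) ?_
  rw [Finsupp.sum_single_index rfl]; exact le_rfl

lemma deg_bm (S : Finset (Fin M × Fin m)) (U : Finset (Fin m)) :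
    (branchMonomial (S, U) : MvPolynomial _ K).totalDegree ≤ S.card + U.card := by
  refine (totalDegree_mul _ _).trans (add_le_add ?_ ?_) <;>
  · refine (totalDegree_finset_prod _ _).trans ?_
    refine le_trans (Finset.sum_le_sum fun p _ => totalDegree_X_le' _) ?_
    simp

lemma bm_insert_fst (S : Finset (Fin M × Fin m)) (U : Finset (Fin m))
    {p : Fin M × Fin m} (hp : p ∉ S) :
    (branchMonomial (insert p S, U) : MvPolynomial _ K) =
      X (Sum.inl p) * branchMonomial (S, U) := by
  unfold branchMonomial; rw [Finset.prod_insert hp]; ring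

lemma bm_insert_snd (S : Finset (Fin M × Fin m)) (U : Finset (Fin m))
    {j : Fin m} (hj : j ∉ U) :
    (branchMonomial (S, insert j U) : MvPolynomial _ K) =
      X (Sum.inr j) * branchMonomial (S, U) := by
  unfold branchMonomial; rw [Finset.prod_insert hj]; ring

lemma bm_erase_fst {S : Finset (Fin M × Fin m)} (U : Finset (Fin m))
    {p : Fin M × Fin m} (hp : p ∈ S) :
    (branchMonomial (S, U) : MvPolynomial _ K) =
      X (Sum.inl p) * branchMonomial (S.erase p, U) := by
  unfold branchMonomial; rw [← Finset.mul_prod_erase S _ hp]; ring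

lemma bm_erase_snd (S : Finset (Fin M × Fin m)) {U : Finset (Fin m)}
    {j : Fin m} (hj : j ∈ U) :
    (branchMonomial (S, U) : MvPolynomial _ K) =
      X (Sum.inr j) * branchMonomial (S, U.erase j) := by
  unfold branchMonomial; rw [← Finset.mul_prod_erase U _ hj]; ring

/-- Resolution: under the invariant, for `i ∈ D` and `j ∉ R`, the term `x_ρ · x_{ij}`
is in the degree-`#ρ` part of the ideal. -/
lemma resolve {D : Finset (Fin M)} {R : Finset (Fin m)}
    (S : Finset (Fin M × Fin m)) (U : Finset (Fin m))
    (h1 : ∀ p ∈ S, p.1 ∉ D ∧ p.2 ∉ R)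
    (h4 : ∀ j : Fin m, j ∉ R → (∃ i, (i, j) ∈ S) ∨ j ∈ U)
    {i : Fin M} {j : Fin m} (hi : i ∈ D) (hj : j ∉ R) :
    NSMem (injStarPHPSystem K M m)
      (branchMonomial (S, U) * X (Sum.inl (i, j))) (S.card + U.card) := by
  rcases h4 j hj with ⟨i', hi'⟩ | hjU
  · have hne : i ≠ i' := fun e => (h1 _ hi').1 (e ▸ hi)
    have hdeg : (branchMonomial (S.erase (i', j), U) : MvPolynomial _ K).totalDegree ≤
        S.card + U.card := by
      refine (deg_bm _ _).trans ?_
      have := Finset.card_erase_le (s := S) (a := (i', j))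
      omega
    refine (NSMem.single (mem_col j hne) hdeg).congr ?_
    rw [bm_erase_fst U hi']; ring
  · have hU1 : 1 ≤ U.card := Finset.card_pos.mpr ⟨j, hjU⟩
    have hdeg'' : (branchMonomial (S, U.erase j) : MvPolynomial _ K).totalDegree ≤
        S.card + U.card - 1 := by
      refine (deg_bm _ _).trans ?_
      rw [Finset.card_erase_of_mem hjU]
      omega
    set P'' : MvPolynomial _ K := branchMonomial (S, U.erase j) with hP''
    have t1 : NSMem (injStarPHPSystem K M m)
        ((P'' * X (Sum.inl (i, j))) *
          ((∑ i' : Fin M, X (Sum.inl (i', j))) + X (Sum.inr j) - 1)) (S.card + U.card) := by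
      refine NSMem.single (mem_ran j) ?_
      refine (totalDegree_mul _ _).trans ?_
      have := totalDegree_X_le' (R := K) (Sum.inl (i, j) : (Fin M × Fin m) ⊕ Fin m)
      omega
    have t2 : NSMem (injStarPHPSystem K M m)
        ((-P'') * (X (Sum.inl (i, j)) ^ 2 - X (Sum.inl (i, j)))) (S.card + U.card) := by
      refine NSMem.single (mem_sq i j) ?_
      rw [totalDegree_neg]; omega
    have t3 : NSMem (injStarPHPSystem K M m)
        (∑ i' ∈ Finset.univ.erase i, (-P'') * (X (Sum.inl (i, j)) * X (Sum.inl (i', j))))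
        (S.card + U.card) := by
      refine NSMem.finsetSum fun i' hi'' => ?_
      refine NSMem.single (mem_col j (Finset.mem_erase.mp hi'').1.symm) ?_
      rw [totalDegree_neg]; omega
    refine ((t1.add t2).add t3).congr ?_
    have hsum3 : ∑ i' ∈ Finset.univ.erase i,
        (-P'') * (X (Sum.inl (i, j)) * X (Sum.inl (i', j))) =
        (-P'' * X (Sum.inl (i, j))) * ∑ i' ∈ Finset.univ.erase i, X (Sum.inl (i', j)) := by
      rw [Finset.mul_sum]; exact Finset.sum_congr rfl fun _ _ => by ring
    have hsplit : (∑ i' : Fin M, X (Sum.inl (i', j)) : MvPolynomial ((Fin M × Fin m) ⊕ Fin m) K) =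
        (∑ i' ∈ Finset.univ.erase i, X (Sum.inl (i', j))) + X (Sum.inl (i, j)) :=
      (Finset.sum_erase_add _ _ (Finset.mem_univ i)).symm
    rw [hsum3, hsplit, bm_erase_snd S hjU, ← hP'']
    ring

/-- Domain query step. -/
lemma domStep {D : Finset (Fin M)} {R : Finset (Fin m)}
    (S : Finset (Fin M × Fin m)) (U : Finset (Fin m))
    (h1 : ∀ p ∈ S, p.1 ∉ D ∧ p.2 ∉ R)
    (h4 : ∀ j : Fin m, j ∉ R → (∃ i, (i, j) ∈ S) ∨ j ∈ U)
    {i : Fin M} (hi : i ∈ D) :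
    NSMem (injStarPHPSystem K M m)
      ((∑ j ∈ R, branchMonomial (S, U) * X (Sum.inl (i, j))) - branchMonomial (S, U))
      (S.card + U.card) := by
  set P : MvPolynomial _ K := branchMonomial (S, U) with hP
  have t1 : NSMem (injStarPHPSystem K M m)
      (P * ((∑ j : Fin m, X (Sum.inl (i, j))) - 1)) (S.card + U.card) :=
    NSMem.single (mem_dom i) (deg_bm S U)
  have t2 : NSMem (injStarPHPSystem K M m)
      (∑ j ∈ Finset.univ \ R, -(P * X (Sum.inl (i, j)))) (S.card + U.card) := by
    refine NSMem.finsetSum fun j hjm => ?_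
    exact (resolve S U h1 h4 hi (Finset.mem_sdiff.mp hjm).2).neg
  refine (t1.add t2).congr ?_
  have e3 : ∑ j ∈ Finset.univ \ R, -(P * X (Sum.inl (i, j))) =
      -(P * ∑ j ∈ Finset.univ \ R, X (Sum.inl (i, j))) := by
    rw [Finset.mul_sum, ← Finset.sum_neg_distrib]
  have e1 : (∑ j : Fin m, X (Sum.inl (i, j)) : MvPolynomial ((Fin M × Fin m) ⊕ Fin m) K) =
      (∑ j ∈ Finset.univ \ R, X (Sum.inl (i, j))) + ∑ j ∈ R, X (Sum.inl (i, j)) :=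
    (Finset.sum_sdiff (Finset.subset_univ R)).symm
  have e2 : ∑ j ∈ R, P * X (Sum.inl (i, j)) = P * ∑ j ∈ R, X (Sum.inl (i, j)) :=
    (Finset.mul_sum _ _ _).symm
  rw [e3, e1, e2]; ring

/-- Range query step. -/
lemma ranStep {D : Finset (Fin M)} {R : Finset (Fin m)}
    (S : Finset (Fin M × Fin m)) (U : Finset (Fin m))
    (h1 : ∀ p ∈ S, p.1 ∉ D ∧ p.2 ∉ R)
    (h3 : ∀ i : Fin M, i ∉ D → ∃ j, (i, j) ∈ S)
    {j : Fin m} (hj : j ∈ R) :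
    NSMem (injStarPHPSystem K M m)
      ((∑ i ∈ D, branchMonomial (S, U) * X (Sum.inl (i, j)))
        + branchMonomial (S, U) * X (Sum.inr j) - branchMonomial (S, U))
      (S.card + U.card) := by
  set P : MvPolynomial _ K := branchMonomial (S, U) with hP
  have t1 : NSMem (injStarPHPSystem K M m)
      (P * ((∑ i : Fin M, X (Sum.inl (i, j))) + X (Sum.inr j) - 1)) (S.card + U.card) :=
    NSMem.single (mem_ran j) (deg_bm S U)
  have t2 : NSMem (injStarPHPSystem K M m)
      (∑ i ∈ Finset.univ \ D, -(P * X (Sum.inl (i, j)))) (S.card + U.card) := by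
    refine NSMem.finsetSum fun i him => ?_
    have hiD : i ∉ D := (Finset.mem_sdiff.mp him).2
    obtain ⟨j', hj'⟩ := h3 i hiD
    have hne : j' ≠ j := fun e => (h1 _ hj').2 (e ▸ hj)
    have hdeg : (branchMonomial (S.erase (i, j'), U) : MvPolynomial _ K).totalDegree ≤
        S.card + U.card := by
      refine (deg_bm _ _).trans ?_
      have := Finset.card_erase_le (s := S) (a := (i, j'))
      omega
    refine ((NSMem.single (mem_row i hne) hdeg).congr ?_).neg
    rw [hP, bm_erase_fst U hj']; ring
  refine (t1.add t2).congr ?_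
  have e3 : ∑ i ∈ Finset.univ \ D, -(P * X (Sum.inl (i, j))) =
      -(P * ∑ i ∈ Finset.univ \ D, X (Sum.inl (i, j))) := by
    rw [Finset.mul_sum, ← Finset.sum_neg_distrib]
  have e1 : (∑ i : Fin M, X (Sum.inl (i, j)) : MvPolynomial ((Fin M × Fin m) ⊕ Fin m) K) =
      (∑ i ∈ Finset.univ \ D, X (Sum.inl (i, j))) + ∑ i ∈ D, X (Sum.inl (i, j)) :=
    (Finset.sum_sdiff (Finset.subset_univ D)).symm
  have e2 : ∑ i ∈ D, P * X (Sum.inl (i, j)) = P * ∑ i ∈ D, X (Sum.inl (i, j)) :=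
    (Finset.mul_sum _ _ _).symm
  rw [e3, e1, e2]; ring

end Aux

lemma sum_map_flatMap {α γ δ : Type*} [AddCommMonoid δ] (l : List α) (g : α → List γ)
    (f : γ → δ) :
    ((l.flatMap g).map f).sum = (l.map fun a => ((g a).map f).sum).sum := by
  induction l with
  | nil => simp
  | cons a l ih => simp [List.flatMap_cons, ih]

lemma branches_subset {α β : Type*} [DecidableEq α] [DecidableEq β]
    {D : Finset α} {R : Finset β} (T : InjPHPTree D R) :
    ∀ b ∈ T.branches, b.1 ⊆ D ×ˢ R ∧ b.2 ⊆ R := by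
  induction T with
  | leaf D R =>
    intro b hb
    simp only [InjPHPTree.branches, List.mem_singleton] at hb
    subst hb
    simp
  | queryDom D R i hi ch ih =>
    intro b hb
    simp only [InjPHPTree.branches, List.mem_flatMap, List.mem_map,
      Finset.mem_toList] at hb
    obtain ⟨j, -, b', hb', rfl⟩ := hb
    obtain ⟨hs1, hs2⟩ := ih j b' hb'
    constructor
    · intro p hp
      rcases Finset.mem_insert.mp hp with rfl | hp
      · exact Finset.mem_product.mpr ⟨hi, j.2⟩
      · have := hs1 hp
        rw [Finset.mem_product] at this ⊢
        exact ⟨Finset.mem_of_mem_erase this.1, Finset.mem_of_mem_erase this.2⟩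
    · exact hs2.trans (Finset.erase_subset _ _)
  | queryRan D R j hj ch chS ih ihS =>
    intro b hb
    simp only [InjPHPTree.branches, List.mem_append, List.mem_flatMap, List.mem_map,
      Finset.mem_toList] at hb
    rcases hb with ⟨i, -, b', hb', rfl⟩ | ⟨b', hb', rfl⟩
    · obtain ⟨hs1, hs2⟩ := ih i b' hb'
      constructor
      · intro p hp
        rcases Finset.mem_insert.mp hp with rfl | hp
        · exact Finset.mem_product.mpr ⟨i.2, hj⟩
        · have := hs1 hp
          rw [Finset.mem_product] at this ⊢
          exact ⟨Finset.mem_of_mem_erase this.1, Finset.mem_of_mem_erase this.2⟩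
      · exact hs2.trans (Finset.erase_subset _ _)
    · obtain ⟨hs1, hs2⟩ := ihS b' hb'
      constructor
      · refine hs1.trans ?_
        exact Finset.product_subset_product (le_refl D) (Finset.erase_subset _ _)
      · intro j' hj'
        rcases Finset.mem_insert.mp hj' with rfl | hj'
        · exact hj
        · exact Finset.mem_of_mem_erase (hs2 hj')

lemma main_NSMem {K : Type*} [CommRing K] {M m : ℕ}
    {D : Finset (Fin M)} {R : Finset (Fin m)} (T : InjPHPTree D R) :
    ∀ (S : Finset (Fin M × Fin m)) (U : Finset (Fin m)),
    (∀ p ∈ S, p.1 ∉ D ∧ p.2 ∉ R) → (∀ j ∈ U, j ∉ R) →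
    (∀ i : Fin M, i ∉ D → ∃ j, (i, j) ∈ S) →
    (∀ j : Fin m, j ∉ R → (∃ i, (i, j) ∈ S) ∨ j ∈ U) →
    NSMem (injStarPHPSystem K M m)
      (branchMonomial (S, U) * (T.branches.map (branchMonomial (K := K))).sum
        - branchMonomial (S, U))
      (S.card + U.card + T.height) := by
  induction T with
  | leaf D R =>
    intro S U h1 h2 h3 h4
    simp only [InjPHPTree.branches, List.map_cons, List.map_nil, List.sum_cons,
      List.sum_nil, add_zero]
    have : (branchMonomial ((∅ : Finset (Fin M × Fin m)), (∅ : Finset (Fin m)))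
        : MvPolynomial _ K) = 1 := by
      unfold branchMonomial; simp
    rw [this, mul_one, sub_self]
    exact NSMem.zero _
  | queryDom D R i hi ch ih =>
    intro S U h1 h2 h3 h4
    set P : MvPolynomial _ K := branchMonomial (S, U) with hPdef
    -- compute the branch sum
    have hsum : (((InjPHPTree.queryDom D R i hi ch).branches).map
        (branchMonomial (K := K))).sum =
        ∑ j ∈ R.attach, X (Sum.inl (i, j.1)) *
          (((ch j).branches).map (branchMonomial (K := K))).sum := by
      simp only [InjPHPTree.branches]
      rw [sum_map_flatMap, ← Finset.sum_map_toList]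
      refine congrArg List.sum (List.map_congr_left fun j _ => ?_)
      rw [List.map_map]
      rw [List.map_congr_left (g := fun b => X (Sum.inl (i, j.1)) *
          branchMonomial (K := K) b) ?_]
      · exact List.sum_map_mul_left _ _ _
      · intro b hb
        have hnot : (i, j.1) ∉ b.1 := fun hmem => by
          have := ((branches_subset (ch j) b hb).1 hmem)
          rw [Finset.mem_product] at this
          exact Finset.notMem_erase i D this.1
        simp only [Function.comp_apply]
        exact bm_insert_fst b.1 b.2 hnot
    rw [hsum]
    -- each child contributes
    have hchild : ∀ j : {j // j ∈ R}, NSMem (injStarPHPSystem K M m)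
        (P * X (Sum.inl (i, j.1)) * (((ch j).branches).map (branchMonomial (K := K))).sum
          - P * X (Sum.inl (i, j.1)))
        (S.card + U.card + ((InjPHPTree.queryDom D R i hi ch).height)) := by
      intro j
      have hnotS : (i, j.1) ∉ S := fun hmem => (h1 _ hmem).1 hi
      have h1' : ∀ p ∈ insert (i, j.1) S, p.1 ∉ D.erase i ∧ p.2 ∉ R.erase j.1 := by
        intro p hp
        rcases Finset.mem_insert.mp hp with rfl | hp
        · exact ⟨Finset.notMem_erase _ _, Finset.notMem_erase _ _⟩
        · exact ⟨fun h => (h1 p hp).1 (Finset.mem_of_mem_erase h),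
            fun h => (h1 p hp).2 (Finset.mem_of_mem_erase h)⟩
      have h2' : ∀ j' ∈ U, j' ∉ R.erase j.1 :=
        fun j' hj' h => h2 j' hj' (Finset.mem_of_mem_erase h)
      have h3' : ∀ i' : Fin M, i' ∉ D.erase i → ∃ j', (i', j') ∈ insert (i, j.1) S := by
        intro i' hi'
        by_cases he : i' = i
        · exact ⟨j.1, he ▸ Finset.mem_insert_self _ _⟩
        · obtain ⟨j'', hj''⟩ := h3 i' (fun hD => hi' (Finset.mem_erase.mpr ⟨he, hD⟩))
          exact ⟨j'', Finset.mem_insert_of_mem hj''⟩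
      have h4' : ∀ j' : Fin m, j' ∉ R.erase j.1 →
          (∃ i', (i', j') ∈ insert (i, j.1) S) ∨ j' ∈ U := by
        intro j' hj'
        by_cases he : j' = j.1
        · exact Or.inl ⟨i, he ▸ Finset.mem_insert_self _ _⟩
        · rcases h4 j' (fun hR => hj' (Finset.mem_erase.mpr ⟨he, hR⟩)) with ⟨i', hi'⟩ | hU
          · exact Or.inl ⟨i', Finset.mem_insert_of_mem hi'⟩
          · exact Or.inr hU
      have := ih j (insert (i, j.1) S) U h1' h2' h3' h4'
      have hcard : (insert (i, j.1) S).card = S.card + 1 :=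
        Finset.card_insert_of_notMem hnotS
      have hht : (ch j).height ≤ R.attach.sup fun j => (ch j).height :=
        Finset.le_sup (f := fun j => (ch j).height) (Finset.mem_attach R j)
      refine (this.mono ?_).congr ?_
      · simp only [InjPHPTree.height]
        omega
      · rw [bm_insert_fst S U hnotS, ← hPdef]
        ring
    have hstep := domStep (K := K) S U h1 h4 hi
    refine ((NSMem.finsetSum (s := R.attach)
        (g := fun j => P * X (Sum.inl (i, j.1)) *
          (((ch j).branches).map (branchMonomial (K := K))).sum
          - P * X (Sum.inl (i, j.1))) fun j _ => hchild j).add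
        (hstep.mono (by omega))).congr ?_
    have eA : P * (∑ j ∈ R.attach, X (Sum.inl (i, j.1)) *
        (((ch j).branches).map (branchMonomial (K := K))).sum) =
        ∑ j ∈ R.attach, P * X (Sum.inl (i, j.1)) *
          (((ch j).branches).map (branchMonomial (K := K))).sum := by
      rw [Finset.mul_sum]; exact Finset.sum_congr rfl fun _ _ => by ring
    rw [Finset.sum_sub_distrib,
      ← Finset.sum_attach R (fun j => P * X (Sum.inl (i, j))), eA]
    ring
  | queryRan D R j hj ch chS ih ihS =>
    intro S U h1 h2 h3 h4
    set P : MvPolynomial _ K := branchMonomial (S, U) with hPdef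
    have hsum : (((InjPHPTree.queryRan D R j hj ch chS).branches).map
        (branchMonomial (K := K))).sum =
        (∑ i ∈ D.attach, X (Sum.inl (i.1, j)) *
          (((ch i).branches).map (branchMonomial (K := K))).sum)
        + X (Sum.inr j) * (((chS).branches).map (branchMonomial (K := K))).sum := by
      simp only [InjPHPTree.branches]
      rw [List.map_append, List.sum_append]
      congr 1
      · rw [sum_map_flatMap, ← Finset.sum_map_toList]
        refine congrArg List.sum (List.map_congr_left fun i _ => ?_)
        rw [List.map_map]
        rw [List.map_congr_left (g := fun b => X (Sum.inl (i.1, j)) *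
            branchMonomial (K := K) b) ?_]
        · exact List.sum_map_mul_left _ _ _
        · intro b hb
          have hnot : (i.1, j) ∉ b.1 := fun hmem => by
            have := ((branches_subset (ch i) b hb).1 hmem)
            rw [Finset.mem_product] at this
            exact Finset.notMem_erase j R this.2
          simp only [Function.comp_apply]
          exact bm_insert_fst b.1 b.2 hnot
      · rw [List.map_map]
        rw [List.map_congr_left (g := fun b => X (Sum.inr j) *
            branchMonomial (K := K) b) ?_]
        · exact List.sum_map_mul_left _ _ _
        · intro b hb
          have hnot : j ∉ b.2 := fun hmem =>
            Finset.notMem_erase j R ((branches_subset chS b hb).2 hmem)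
          simp only [Function.comp_apply]
          exact bm_insert_snd b.1 b.2 hnot
    rw [hsum]
    have hchild : ∀ i : {i // i ∈ D}, NSMem (injStarPHPSystem K M m)
        (P * X (Sum.inl (i.1, j)) * (((ch i).branches).map (branchMonomial (K := K))).sum
          - P * X (Sum.inl (i.1, j)))
        (S.card + U.card + ((InjPHPTree.queryRan D R j hj ch chS).height)) := by
      intro i
      have hnotS : (i.1, j) ∉ S := fun hmem => (h1 _ hmem).2 hj
      have h1' : ∀ p ∈ insert (i.1, j) S, p.1 ∉ D.erase i.1 ∧ p.2 ∉ R.erase j := by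
        intro p hp
        rcases Finset.mem_insert.mp hp with rfl | hp
        · exact ⟨Finset.notMem_erase _ _, Finset.notMem_erase _ _⟩
        · exact ⟨fun h => (h1 p hp).1 (Finset.mem_of_mem_erase h),
            fun h => (h1 p hp).2 (Finset.mem_of_mem_erase h)⟩
      have h2' : ∀ j' ∈ U, j' ∉ R.erase j :=
        fun j' hj' h => h2 j' hj' (Finset.mem_of_mem_erase h)
      have h3' : ∀ i' : Fin M, i' ∉ D.erase i.1 → ∃ j', (i', j') ∈ insert (i.1, j) S := by
        intro i' hi'
        by_cases he : i' = i.1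
        · exact ⟨j, he ▸ Finset.mem_insert_self _ _⟩
        · obtain ⟨j'', hj''⟩ := h3 i' (fun hD => hi' (Finset.mem_erase.mpr ⟨he, hD⟩))
          exact ⟨j'', Finset.mem_insert_of_mem hj''⟩
      have h4' : ∀ j' : Fin m, j' ∉ R.erase j →
          (∃ i', (i', j') ∈ insert (i.1, j) S) ∨ j' ∈ U := by
        intro j' hj'
        by_cases he : j' = j
        · exact Or.inl ⟨i.1, he ▸ Finset.mem_insert_self _ _⟩
        · rcases h4 j' (fun hR => hj' (Finset.mem_erase.mpr ⟨he, hR⟩)) with ⟨i', hi'⟩ | hU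
          · exact Or.inl ⟨i', Finset.mem_insert_of_mem hi'⟩
          · exact Or.inr hU
      have := ih i (insert (i.1, j) S) U h1' h2' h3' h4'
      have hcard : (insert (i.1, j) S).card = S.card + 1 :=
        Finset.card_insert_of_notMem hnotS
      have hht : (ch i).height ≤ D.attach.sup fun i => (ch i).height :=
        Finset.le_sup (f := fun i => (ch i).height) (Finset.mem_attach D i)
      refine (this.mono ?_).congr ?_
      · simp only [InjPHPTree.height]
        omega
      · rw [bm_insert_fst S U hnotS, ← hPdef]
        ring
    have hsing : NSMem (injStarPHPSystem K M m)
        (P * X (Sum.inr j) * (((chS).branches).map (branchMonomial (K := K))).sum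
          - P * X (Sum.inr j))
        (S.card + U.card + ((InjPHPTree.queryRan D R j hj ch chS).height)) := by
      have hnotU : j ∉ U := fun hmem => h2 j hmem hj
      have h1' : ∀ p ∈ S, p.1 ∉ D ∧ p.2 ∉ R.erase j :=
        fun p hp => ⟨(h1 p hp).1, fun h => (h1 p hp).2 (Finset.mem_of_mem_erase h)⟩
      have h2' : ∀ j' ∈ insert j U, j' ∉ R.erase j := by
        intro j' hj'
        rcases Finset.mem_insert.mp hj' with rfl | hj'
        · exact Finset.notMem_erase _ _
        · exact fun h => h2 j' hj' (Finset.mem_of_mem_erase h)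
      have h4' : ∀ j' : Fin m, j' ∉ R.erase j →
          (∃ i', (i', j') ∈ S) ∨ j' ∈ insert j U := by
        intro j' hj'
        by_cases he : j' = j
        · exact Or.inr (he ▸ Finset.mem_insert_self _ _)
        · rcases h4 j' (fun hR => hj' (Finset.mem_erase.mpr ⟨he, hR⟩)) with h | hU
          · exact Or.inl h
          · exact Or.inr (Finset.mem_insert_of_mem hU)
      have := ihS S (insert j U) h1' h2' h3 h4'
      have hcard : (insert j U).card = U.card + 1 :=
        Finset.card_insert_of_notMem hnotU
      refine (this.mono ?_).congr ?_
      · simp only [InjPHPTree.height]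
        omega
      · rw [bm_insert_snd S U hnotU, ← hPdef]
        ring
    have hstep := ranStep (K := K) S U h1 h3 hj
    refine (((NSMem.finsetSum (s := D.attach)
        (g := fun i => P * X (Sum.inl (i.1, j)) *
          (((ch i).branches).map (branchMonomial (K := K))).sum
          - P * X (Sum.inl (i.1, j))) fun i _ => hchild i).add hsing).add
        (hstep.mono (by omega))).congr ?_
    have eA : P * (∑ i ∈ D.attach, X (Sum.inl (i.1, j)) *
        (((ch i).branches).map (branchMonomial (K := K))).sum) =
        ∑ i ∈ D.attach, P * X (Sum.inl (i.1, j)) *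
          (((ch i).branches).map (branchMonomial (K := K))).sum := by
      rw [Finset.mul_sum]; exact Finset.sum_congr rfl fun _ _ => by ring
    rw [Finset.sum_sub_distrib,
      ← Finset.sum_attach D (fun i => P * X (Sum.inl (i, j))), mul_add, eA]
    ring

/-- For `M > m ≥ 1` and any `injPHP`-tree `T` over `([M], [m])`, the equation
`Σ_{b ∈ br(T)} x_b = 1` has an NS-proof over `K` from `¬inj*PHP^M_m` of degree at most
`height(T)`. -/
theorem injPHPTree_branch_sum_NSproof (K : Type*) [CommRing K] (M m : ℕ)
    (hm : 1 ≤ m) (hMm : m < M)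
    (T : InjPHPTree (Finset.univ : Finset (Fin M)) (Finset.univ : Finset (Fin m))) :
    IsNSProofOfDeg (injStarPHPSystem K M m)
      ((T.branches.map (branchMonomial (K := K))).sum) 1 T.height := by
  have h := main_NSMem (K := K) T ∅ ∅ (fun p hp => absurd hp (Finset.notMem_empty p))
    (fun j hj => absurd hj (Finset.notMem_empty j))
    (fun i hi => absurd (Finset.mem_univ i) hi)
    (fun j hj => absurd (Finset.mem_univ j) hj)
  have hbm : (branchMonomial ((∅ : Finset (Fin M × Fin m)), (∅ : Finset (Fin m)))
      : MvPolynomial _ K) = 1 := by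
    unfold branchMonomial; simp
  rw [hbm, one_mul] at h
  simpa using (isNS_iff.mpr h)
end

section
/- Let D and R be disjoint finite sets, let T be an injPHP-tree over (D,R), and let ρ be a partial injection from D to R such that height(T) + #ρ ≤ |R|. Then there exists a branch b ∈ br(T) whose associated partial injection is compatible with ρ (b ∥ ρ). -/
/-- `IsPartialInj D R pr sg` says that the collection of blocks consisting of the
2-element blocks `⟨i,j⟩` for `(i,j) ∈ pr` and the singleton blocks `⟨j⟩` for `j ∈ sg`
is a partial injection from `D` to `R`: all blocks are contained in `D ∪ R` as indicated
and the blocks are pairwise disjoint. -/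
def IsPartialInj {α β : Type*} (D : Finset α) (R : Finset β)
    (pr : Finset (α × β)) (sg : Finset β) : Prop :=
  (∀ p ∈ pr, p.1 ∈ D ∧ p.2 ∈ R) ∧
  sg ⊆ R ∧
  (∀ p ∈ pr, ∀ q ∈ pr, p.1 = q.1 → p = q) ∧
  (∀ p ∈ pr, ∀ q ∈ pr, p.2 = q.2 → p = q) ∧
  (∀ p ∈ pr, p.2 ∉ sg)

section Aux
variable {α β : Type*} [DecidableEq α] [DecidableEq β]

lemma isPartialInj_restrict {D D' : Finset α} {R R' : Finset β}
    {pr pr' : Finset (α × β)} {sg sg' : Finset β}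
    (h : IsPartialInj D R pr sg) (hpr : pr' ⊆ pr) (hsg : sg' ⊆ sg)
    (h1 : ∀ p ∈ pr', p.1 ∈ D') (h2 : ∀ p ∈ pr', p.2 ∈ R') (h3 : sg' ⊆ R') :
    IsPartialInj D' R' pr' sg' :=
  ⟨fun p hp => ⟨h1 p hp, h2 p hp⟩, h3,
   fun p hp q hq => h.2.2.1 p (hpr hp) q (hpr hq),
   fun p hp q hq => h.2.2.2.1 p (hpr hp) q (hpr hq),
   fun p hp hm => h.2.2.2.2 p (hpr hp) (hsg hm)⟩

lemma isPartialInj_insert_pair {D : Finset α} {R : Finset β}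
    {pr : Finset (α × β)} {sg : Finset β} {i : α} {j : β} (hi : i ∈ D) (hj : j ∈ R)
    (h : IsPartialInj (D.erase i) (R.erase j) pr sg) :
    IsPartialInj D R (insert (i, j) pr) sg := by
  obtain ⟨h1, h2, h3, h4, h5⟩ := h
  have hne1 : ∀ p ∈ pr, p.1 ≠ i := fun p hp => (Finset.mem_erase.mp (h1 p hp).1).1
  have hne2 : ∀ p ∈ pr, p.2 ≠ j := fun p hp => (Finset.mem_erase.mp (h1 p hp).2).1
  refine ⟨?_, h2.trans (Finset.erase_subset _ _), ?_, ?_, ?_⟩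
  · intro p hp
    rcases Finset.mem_insert.mp hp with rfl | hp
    · exact ⟨hi, hj⟩
    · exact ⟨Finset.mem_of_mem_erase (h1 p hp).1, Finset.mem_of_mem_erase (h1 p hp).2⟩
  · intro p hp q hq hpq
    rcases Finset.mem_insert.mp hp with rfl | hp <;> rcases Finset.mem_insert.mp hq with rfl | hq
    · rfl
    · exact absurd hpq.symm (hne1 q hq)
    · exact absurd hpq (hne1 p hp)
    · exact h3 p hp q hq hpq
  · intro p hp q hq hpq
    rcases Finset.mem_insert.mp hp with rfl | hp <;> rcases Finset.mem_insert.mp hq with rfl | hq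
    · rfl
    · exact absurd hpq.symm (hne2 q hq)
    · exact absurd hpq (hne2 p hp)
    · exact h4 p hp q hq hpq
  · intro p hp
    rcases Finset.mem_insert.mp hp with rfl | hp
    · exact fun hjs => (Finset.mem_erase.mp (h2 hjs)).1 rfl
    · exact h5 p hp

lemma isPartialInj_insert_sing {D : Finset α} {R : Finset β}
    {pr : Finset (α × β)} {sg : Finset β} {j : β} (hj : j ∈ R)
    (h : IsPartialInj D (R.erase j) pr sg) :
    IsPartialInj D R pr (insert j sg) := by
  obtain ⟨h1, h2, h3, h4, h5⟩ := h
  refine ⟨fun p hp => ⟨(h1 p hp).1, Finset.mem_of_mem_erase (h1 p hp).2⟩, ?_, h3, h4, ?_⟩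
  · intro x hx
    rcases Finset.mem_insert.mp hx with rfl | hx
    · exact hj
    · exact Finset.mem_of_mem_erase (h2 hx)
  · intro p hp hmem
    rcases Finset.mem_insert.mp hmem with he | hmem
    · exact (Finset.mem_erase.mp (h1 p hp).2).1 he
    · exact h5 p hp hmem

end Aux

/-- If `T` is an `injPHP`-tree over disjoint finite sets `(D, R)` and `ρ = (pr, sg)` is a
partial injection from `D` to `R` with `height(T) + #ρ ≤ |R|`, then some branch
`b ∈ br(T)` is compatible with `ρ` (i.e. the union of their block collections is again a
partial injection). -/
theorem injPHPTree_exists_compatible_branch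
    {α β : Type*} [DecidableEq α] [DecidableEq β]
    (D : Finset α) (R : Finset β) (T : InjPHPTree D R)
    (pr : Finset (α × β)) (sg : Finset β)
    (hρ : IsPartialInj D R pr sg)
    (h : T.height + (pr.card + sg.card) ≤ R.card) :
    ∃ b ∈ T.branches, IsPartialInj D R (b.1 ∪ pr) (b.2 ∪ sg) := by
  induction T generalizing pr sg with
  | leaf D R =>
    exact ⟨(∅, ∅), by simp [InjPHPTree.branches], by simpa using hρ⟩
  | queryDom D R i hi ch IH =>
    simp only [InjPHPTree.height] at h
    by_cases hc : ∃ p ∈ pr, p.1 = i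
    · obtain ⟨p, hp0, hpi⟩ := hc
      obtain ⟨j0, hp⟩ : ∃ j0, (i, j0) ∈ pr := ⟨p.2, by rw [← hpi]; exact hp0⟩
      have hj0 : j0 ∈ R := (hρ.1 _ hp).2
      have hsup : (ch ⟨j0, hj0⟩).height ≤ R.attach.sup fun j => (ch j).height :=
        by exact Finset.le_sup (f := fun j => (ch j).height) (Finset.mem_attach R ⟨j0, hj0⟩)
      have hrestr : IsPartialInj (D.erase i) (R.erase j0) (pr.erase (i, j0)) sg := by
        refine isPartialInj_restrict hρ (Finset.erase_subset _ _) le_rfl ?_ ?_ ?_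
        · intro q hq
          obtain ⟨hne, hq'⟩ := Finset.mem_erase.mp hq
          refine Finset.mem_erase.mpr ⟨fun he => hne ?_, (hρ.1 q hq').1⟩
          exact hρ.2.2.1 q hq' (i, j0) hp he
        · intro q hq
          obtain ⟨hne, hq'⟩ := Finset.mem_erase.mp hq
          refine Finset.mem_erase.mpr ⟨fun he => hne ?_, (hρ.1 q hq').2⟩
          exact hρ.2.2.2.1 q hq' (i, j0) hp he
        · intro x hx
          exact Finset.mem_erase.mpr ⟨fun he => hρ.2.2.2.2 _ hp (he ▸ hx), hρ.2.1 hx⟩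
      have hcard : (ch ⟨j0, hj0⟩).height + ((pr.erase (i, j0)).card + sg.card)
          ≤ (R.erase j0).card := by
        have h1 := Finset.card_erase_of_mem hp
        have h2 := Finset.card_erase_of_mem hj0
        have h3 : 0 < pr.card := Finset.card_pos.mpr ⟨_, hp⟩
        have h4 : 0 < R.card := Finset.card_pos.mpr ⟨_, hj0⟩
        omega
      obtain ⟨b, hb, hbpi⟩ := IH ⟨j0, hj0⟩ _ _ hrestr hcard
      refine ⟨(insert (i, j0) b.1, b.2), ?_, ?_⟩
      · simp only [InjPHPTree.branches, List.mem_flatMap, List.mem_map]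
        exact ⟨⟨j0, hj0⟩, Finset.mem_toList.mpr (Finset.mem_attach _ _), b, hb, rfl⟩
      · have heq : insert (i, j0) b.1 ∪ pr = insert (i, j0) (b.1 ∪ pr.erase (i, j0)) := by
          ext q
          simp only [Finset.mem_insert, Finset.mem_union, Finset.mem_erase]
          tauto
        rw [heq]
        exact isPartialInj_insert_pair hi hj0 hbpi
    · push_neg at hc
      have hsub : pr.image Prod.snd ∪ sg ⊆ R := by
        intro x hx
        rcases Finset.mem_union.mp hx with hx | hx
        · obtain ⟨q, hq, rfl⟩ := Finset.mem_image.mp hx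
          exact (hρ.1 q hq).2
        · exact hρ.2.1 hx
      have hlt : (pr.image Prod.snd ∪ sg).card < R.card := by
        have := Finset.card_union_le (pr.image Prod.snd) sg
        have := Finset.card_image_le (s := pr) (f := Prod.snd)
        omega
      have hex : ∃ j0 ∈ R, j0 ∉ pr.image Prod.snd ∪ sg := by
        by_contra hcon
        push_neg at hcon
        exact absurd (Finset.card_le_card hcon) (not_le.mpr hlt)
      obtain ⟨j0, hj0, hj0n⟩ := hex
      rw [Finset.mem_union, not_or] at hj0n
      have hsup : (ch ⟨j0, hj0⟩).height ≤ R.attach.sup fun j => (ch j).height :=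
        by exact Finset.le_sup (f := fun j => (ch j).height) (Finset.mem_attach R ⟨j0, hj0⟩)
      have hrestr : IsPartialInj (D.erase i) (R.erase j0) pr sg := by
        refine isPartialInj_restrict hρ le_rfl le_rfl ?_ ?_ ?_
        · intro q hq
          exact Finset.mem_erase.mpr ⟨fun he => hc q hq he, (hρ.1 q hq).1⟩
        · intro q hq
          refine Finset.mem_erase.mpr ⟨fun he => hj0n.1 ?_, (hρ.1 q hq).2⟩
          exact Finset.mem_image.mpr ⟨q, hq, he⟩
        · intro x hx
          exact Finset.mem_erase.mpr ⟨fun he => hj0n.2 (he ▸ hx), hρ.2.1 hx⟩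
      have hcard : (ch ⟨j0, hj0⟩).height + (pr.card + sg.card) ≤ (R.erase j0).card := by
        have h2 := Finset.card_erase_of_mem hj0
        have h4 : 0 < R.card := Finset.card_pos.mpr ⟨_, hj0⟩
        omega
      obtain ⟨b, hb, hbpi⟩ := IH ⟨j0, hj0⟩ _ _ hrestr hcard
      refine ⟨(insert (i, j0) b.1, b.2), ?_, ?_⟩
      · simp only [InjPHPTree.branches, List.mem_flatMap, List.mem_map]
        exact ⟨⟨j0, hj0⟩, Finset.mem_toList.mpr (Finset.mem_attach _ _), b, hb, rfl⟩
      · have heq : insert (i, j0) b.1 ∪ pr = insert (i, j0) (b.1 ∪ pr) := by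
          ext q
          simp only [Finset.mem_insert, Finset.mem_union]
          tauto
        rw [heq]
        exact isPartialInj_insert_pair hi hj0 hbpi
  | queryRan D R j hj ch chS IH IHS =>
    simp only [InjPHPTree.height] at h
    by_cases hc : ∃ p ∈ pr, p.2 = j
    · obtain ⟨p, hp0, hpj⟩ := hc
      obtain ⟨i0, hp⟩ : ∃ i0, (i0, j) ∈ pr := ⟨p.1, by rw [← hpj]; exact hp0⟩
      have hi0 : i0 ∈ D := (hρ.1 _ hp).1
      have hsup : (ch ⟨i0, hi0⟩).height ≤ D.attach.sup fun i => (ch i).height :=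
        by exact Finset.le_sup (f := fun i => (ch i).height) (Finset.mem_attach D ⟨i0, hi0⟩)
      have hrestr : IsPartialInj (D.erase i0) (R.erase j) (pr.erase (i0, j)) sg := by
        refine isPartialInj_restrict hρ (Finset.erase_subset _ _) le_rfl ?_ ?_ ?_
        · intro q hq
          obtain ⟨hne, hq'⟩ := Finset.mem_erase.mp hq
          refine Finset.mem_erase.mpr ⟨fun he => hne ?_, (hρ.1 q hq').1⟩
          exact hρ.2.2.1 q hq' (i0, j) hp he
        · intro q hq
          obtain ⟨hne, hq'⟩ := Finset.mem_erase.mp hq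
          refine Finset.mem_erase.mpr ⟨fun he => hne ?_, (hρ.1 q hq').2⟩
          exact hρ.2.2.2.1 q hq' (i0, j) hp he
        · intro x hx
          exact Finset.mem_erase.mpr ⟨fun he => hρ.2.2.2.2 _ hp (he ▸ hx), hρ.2.1 hx⟩
      have hcard : (ch ⟨i0, hi0⟩).height + ((pr.erase (i0, j)).card + sg.card)
          ≤ (R.erase j).card := by
        have h1 := Finset.card_erase_of_mem hp
        have h2 := Finset.card_erase_of_mem hj
        have h3 : 0 < pr.card := Finset.card_pos.mpr ⟨_, hp⟩
        have h4 : 0 < R.card := Finset.card_pos.mpr ⟨_, hj⟩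
        omega
      obtain ⟨b, hb, hbpi⟩ := IH ⟨i0, hi0⟩ _ _ hrestr hcard
      refine ⟨(insert (i0, j) b.1, b.2), ?_, ?_⟩
      · simp only [InjPHPTree.branches, List.mem_append, List.mem_flatMap, List.mem_map]
        exact Or.inl ⟨⟨i0, hi0⟩, Finset.mem_toList.mpr (Finset.mem_attach _ _), b, hb, rfl⟩
      · have heq : insert (i0, j) b.1 ∪ pr = insert (i0, j) (b.1 ∪ pr.erase (i0, j)) := by
          ext q
          simp only [Finset.mem_insert, Finset.mem_union, Finset.mem_erase]
          tauto
        rw [heq]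
        exact isPartialInj_insert_pair hi0 hj hbpi
    · push_neg at hc
      by_cases hjs : j ∈ sg
      · have hrestr : IsPartialInj D (R.erase j) pr (sg.erase j) := by
          refine isPartialInj_restrict hρ le_rfl (Finset.erase_subset _ _) ?_ ?_ ?_
          · exact fun q hq => (hρ.1 q hq).1
          · intro q hq
            exact Finset.mem_erase.mpr ⟨hc q hq, (hρ.1 q hq).2⟩
          · intro x hx
            obtain ⟨hne, hx'⟩ := Finset.mem_erase.mp hx
            exact Finset.mem_erase.mpr ⟨hne, hρ.2.1 hx'⟩
        have hcard : chS.height + (pr.card + (sg.erase j).card) ≤ (R.erase j).card := by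
          have h1 := Finset.card_erase_of_mem hjs
          have h2 := Finset.card_erase_of_mem hj
          have h3 : 0 < sg.card := Finset.card_pos.mpr ⟨_, hjs⟩
          have h4 : 0 < R.card := Finset.card_pos.mpr ⟨_, hj⟩
          omega
        obtain ⟨b, hb, hbpi⟩ := IHS _ _ hrestr hcard
        refine ⟨(b.1, insert j b.2), ?_, ?_⟩
        · simp only [InjPHPTree.branches, List.mem_append, List.mem_map]
          exact Or.inr ⟨b, hb, rfl⟩
        · have heq : insert j b.2 ∪ sg = insert j (b.2 ∪ sg.erase j) := by
            ext x
            simp only [Finset.mem_insert, Finset.mem_union, Finset.mem_erase]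
            tauto
          rw [heq]
          exact isPartialInj_insert_sing hj hbpi
      · have hrestr : IsPartialInj D (R.erase j) pr sg := by
          refine isPartialInj_restrict hρ le_rfl le_rfl ?_ ?_ ?_
          · exact fun q hq => (hρ.1 q hq).1
          · intro q hq
            exact Finset.mem_erase.mpr ⟨hc q hq, (hρ.1 q hq).2⟩
          · intro x hx
            exact Finset.mem_erase.mpr ⟨fun he => hjs (he ▸ hx), hρ.2.1 hx⟩
        have hcard : chS.height + (pr.card + sg.card) ≤ (R.erase j).card := by
          have h2 := Finset.card_erase_of_mem hj
          have h4 : 0 < R.card := Finset.card_pos.mpr ⟨_, hj⟩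
          omega
        obtain ⟨b, hb, hbpi⟩ := IHS _ _ hrestr hcard
        refine ⟨(b.1, insert j b.2), ?_, ?_⟩
        · simp only [InjPHPTree.branches, List.mem_append, List.mem_map]
          exact Or.inr ⟨b, hb, rfl⟩
        · have heq : insert j b.2 ∪ sg = insert j (b.2 ∪ sg) := by
            ext x
            simp only [Finset.mem_insert, Finset.mem_union]
            tauto
          rw [heq]
          exact isPartialInj_insert_sing hj hbpi
end
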